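/- Let L be a closed subspace of E = ℓ²(X), and X₀, X₀' disjoint finite subsets of X. Say L is (X₀,X₀')-regular if L ∩ E_{X₀'} = {0} and L^⊥ ∩ E_{X₀} = {0}. If L is (X₀,X₀')-regular and X₀' = X₁' ⊔ X₂', then the projected subspace L_{∅,X₁'} := (L + E_{X₁'}) ∩ E_{X∖X₁'} is (X₀, X₂')-regular as a subspace of E_{X∖X₁'}. -/

import Mathlib

/-! The closed spans satisfy `E_A ⟂ E_B` for disjoint `A, B`, and `E_A + E_{Aᶜ} = ℓ²(X)`
algebraically (`E_{Aᶜ} ⊇ E_Aᗮ`). With the modular law this gives, for `A ⊆ C`,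
`(L + E_A) ∩ E_C = E_A + (L ∩ E_C)` and `L_{∅,A} + E_A = L + E_A`. The first identity with
`C = X₀'` puts `L_{∅,X₁'} ∩ E_{X₂'}` inside `E_{X₁'} ∩ E_{X₁'ᶜ} = 0`; by the second, a vector
of `E_{X₀}` (hence orthogonal to `E_{X₁'}`) that is orthogonal to `L_{∅,X₁'}` is orthogonal
to `L`, so it vanishes. -/

noncomputable section

variable {X : Type*} [DecidableEq X]

/-- The canonical basis vector `e_x` of `ℓ²(X)`. -/
def basisVec (x : X) : lp (fun _ : X => ℂ) 2 := lp.single 2 x 1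

/-- `E_A`: the closed linear span of the basis vectors indexed by `A`. -/
def spanE (A : Set X) : Submodule ℂ (lp (fun _ : X => ℂ) 2) :=
  (Submodule.span ℂ (basisVec '' A)).topologicalClosure

/-- The `(X₀,X₀')`-reduction `L_{X₀,X₀'} = (L + E_{X₀'}) ∩ E_{X∖(X₀⊔X₀')}` of `L`. -/
def reduction (L : Submodule ℂ (lp (fun _ : X => ℂ) 2)) (X₀ X₀' : Set X) :
    Submodule ℂ (lp (fun _ : X => ℂ) 2) :=
  (L ⊔ spanE X₀') ⊓ spanE (X₀ ∪ X₀')ᶜ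

open scoped InnerProductSpace

lemma mem_spanE_iff {A : Set X} {f : lp (fun _ : X => ℂ) 2} :
    f ∈ spanE A ↔ ∀ x ∉ A, f x = 0 := by
  constructor
  · intro hf x hx
    have hle : spanE A ≤ LinearMap.ker (lp.evalCLM ℂ (fun _ : X => ℂ) 2 x).toLinearMap := by
      refine Submodule.topologicalClosure_minimal _ ?_ (ContinuousLinearMap.isClosed_ker _)
      rw [Submodule.span_le]
      rintro _ ⟨y, hy, rfl⟩
      exact lp.single_apply_ne 2 y _ (ne_of_mem_of_not_mem hy hx).symm
    exact hle hf
  · intro hf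
    refine (Submodule.isClosed_topologicalClosure _).mem_of_tendsto
      (lp.hasSum_single ENNReal.ofNat_ne_top f) (Filter.Eventually.of_forall fun s => ?_)
    refine Submodule.sum_mem _ fun x _ => ?_
    by_cases hx : x ∈ A
    · rw [← mul_one (f x), ← smul_eq_mul, lp.single_smul]
      exact Submodule.smul_mem _ _
        (Submodule.le_topologicalClosure _ (Submodule.subset_span ⟨x, hx, rfl⟩))
    · rw [hf x hx, lp.single_zero]
      exact Submodule.zero_mem _

lemma spanE_mono {A B : Set X} (h : A ⊆ B) : spanE A ≤ spanE B :=
  Submodule.topologicalClosure_mono (Submodule.span_mono (Set.image_mono h))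

lemma isOrtho_spanE {A B : Set X} (h : Disjoint A B) : spanE A ⟂ spanE B := by
  rw [Submodule.isOrtho_iff_inner_eq]
  intro f hf g hg
  rw [lp.inner_eq_tsum]
  refine (tsum_congr fun x => ?_).trans tsum_zero
  by_cases hx : x ∈ A
  · simp [mem_spanE_iff.mp hg x (h.notMem_of_mem_left hx)]
  · simp [mem_spanE_iff.mp hf x hx]

lemma spanE_sup_spanE_compl (A : Set X) : spanE A ⊔ spanE Aᶜ = ⊤ := by
  have horth : (spanE A)ᗮ ≤ spanE Aᶜ := fun g hg =>
    mem_spanE_iff.mpr fun x hx => by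
      have he : lp.single 2 x (1 : ℂ) ∈ spanE A :=
        mem_spanE_iff.mpr fun y hy => lp.single_apply_ne 2 x _ (by rintro rfl; exact hx hy)
      simpa [lp.inner_single_left] using Submodule.inner_right_of_mem_orthogonal he hg
  have : CompleteSpace (spanE A) := Submodule.topologicalClosure.completeSpace _
  rw [eq_top_iff, ← Submodule.sup_orthogonal_of_hasOrthogonalProjection (K := spanE A)]
  exact sup_le_sup_left horth _

lemma reduction_empty (L : Submodule ℂ (lp (fun _ : X => ℂ) 2)) (A : Set X) :
    reduction L ∅ A = (L ⊔ spanE A) ⊓ spanE Aᶜ := by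
  rw [reduction, Set.empty_union]

lemma reduction_empty_sup_spanE (L : Submodule ℂ (lp (fun _ : X => ℂ) 2)) (A : Set X) :
    reduction L ∅ A ⊔ spanE A = L ⊔ spanE A := by
  rw [reduction_empty, inf_sup_assoc_of_le _ le_sup_right, sup_comm (spanE Aᶜ),
    spanE_sup_spanE_compl, inf_top_eq]

lemma reduction_empty_inf_spanE_eq_bot {L : Submodule ℂ (lp (fun _ : X => ℂ) 2)}
    {A B C : Set X} (hA : A ⊆ C) (hB : B ⊆ C) (hL : L ⊓ spanE C = ⊥) :
    reduction L ∅ A ⊓ spanE B = ⊥ := by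
  have hC : (L ⊔ spanE A) ⊓ spanE C = spanE A := by
    rw [sup_comm, sup_inf_assoc_of_le _ (spanE_mono hA), hL, sup_bot_eq]
  refine eq_bot_mono ?_ (isOrtho_spanE (disjoint_compl_right (a := A))).disjoint.eq_bot
  calc reduction L ∅ A ⊓ spanE B
      ≤ (L ⊔ spanE A) ⊓ spanE C ⊓ spanE Aᶜ := by
        rw [reduction_empty, inf_right_comm]
        exact inf_le_inf_right _ (inf_le_inf_left _ (spanE_mono hB))
    _ = spanE A ⊓ spanE Aᶜ := by rw [hC]

lemma orthogonal_reduction_empty_inf_spanE_eq_bot {L : Submodule ℂ (lp (fun _ : X => ℂ) 2)}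
    {A C : Set X} (hCA : Disjoint C A) (hL : Lᗮ ⊓ spanE C = ⊥) :
    (reduction L ∅ A)ᗮ ⊓ spanE C = ⊥ := by
  refine eq_bot_mono (le_inf ?_ inf_le_right) hL
  calc (reduction L ∅ A)ᗮ ⊓ spanE C
      ≤ (reduction L ∅ A)ᗮ ⊓ (spanE A)ᗮ := inf_le_inf_left _ (isOrtho_spanE hCA)
    _ = (L ⊔ spanE A)ᗮ := by rw [Submodule.inf_orthogonal, reduction_empty_sup_spanE]
    _ ≤ Lᗮ := Submodule.orthogonal_le le_sup_left

theorem stmt9_general (L : Submodule ℂ (lp (fun _ : X => ℂ) 2))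
    (X₀ X₀' X₁' X₂' : Set X)
    (hdisj : Disjoint X₀ X₀') (hpart : X₀' = X₁' ∪ X₂')
    (hreg₁ : L ⊓ spanE X₀' = ⊥) (hreg₂ : Lᗮ ⊓ spanE X₀ = ⊥) :
    reduction L ∅ X₁' ⊓ spanE X₂' = ⊥ ∧
    ((reduction L ∅ X₁')ᗮ ⊓ spanE X₁'ᶜ) ⊓ spanE X₀ = ⊥ := by
  have h₁ : X₁' ⊆ X₀' := hpart ▸ Set.subset_union_left
  have h₂ : X₂' ⊆ X₀' := hpart ▸ Set.subset_union_right
  exact ⟨reduction_empty_inf_spanE_eq_bot h₁ h₂ hreg₁,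
    eq_bot_mono (inf_le_inf_right _ inf_le_left)
      (orthogonal_reduction_empty_inf_spanE_eq_bot (hdisj.mono_right h₁) hreg₂)⟩

/-- If `L` is `(X₀,X₀')`-regular and `X₀' = X₁' ⊔ X₂'`, then the projected subspace
`L_{∅,X₁'}` is `(X₀,X₂')`-regular as a subspace of `E_{X∖X₁'}` (orthogonal complements
of the reduced subspace being taken within `E_{X∖X₁'}`). -/
theorem stmt9 (L : Submodule ℂ (lp (fun _ : X => ℂ) 2))
    (hL : IsClosed (L : Set (lp (fun _ : X => ℂ) 2)))
    (X₀ X₀' X₁' X₂' : Set X) (hfin₀ : X₀.Finite) (hfin₀' : X₀'.Finite)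
    (hdisj : Disjoint X₀ X₀') (hpart : X₀' = X₁' ∪ X₂') (hdisj' : Disjoint X₁' X₂')
    (hreg₁ : L ⊓ spanE X₀' = ⊥) (hreg₂ : Lᗮ ⊓ spanE X₀ = ⊥) :
    reduction L ∅ X₁' ⊓ spanE X₂' = ⊥ ∧
    ((reduction L ∅ X₁')ᗮ ⊓ spanE X₁'ᶜ) ⊓ spanE X₀ = ⊥ :=
  stmt9_general L X₀ X₀' X₁' X₂' hdisj hpart hreg₁ hreg₂

end
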